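/- Let n = 2ν+1 be odd with ν ≥ 2 and let λ be any eigenvalue of the Laplacian matrix L(F_2(C_n)) regarded as a complex matrix. Then there exist an n-th root of unity ζ ∈ ℂ and a nonzero vector f = (f₁,…,f_ν) ∈ ℂ^ν with B(ζ)f = λf, such that the vector y ∈ ℂ^{V(F_2(C_n))} defined on each 2-subset of ℤ/nℤ written uniquely as {j, j+h} with j ∈ ℤ/nℤ and h ∈ {1,…,ν} by y_{{j, j+h}} = f_h·ζ^j, is nonzero and satisfies L(F_2(C_n))·y = λ·y. -/

import Mathlib

open Finset Polynomial Real Matrix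

noncomputable section

/-- The `k`-token graph of a simple graph `G`. -/
def tokenGraph {V : Type*} [DecidableEq V] (G : SimpleGraph V) (k : ℕ) :
    SimpleGraph {s : Finset V // s.card = k} where
  Adj A B := ∃ a b, G.Adj a b ∧ a ∈ A.1 ∧ b ∈ B.1 ∧ symmDiff A.1 B.1 = {a, b}
  symm := ⟨by
    rintro A B ⟨a, b, hab, ha, hb, hd⟩
    exact ⟨b, a, hab.symm, hb, ha, by rw [symmDiff_comm, hd, Finset.pair_comm]⟩⟩
  loopless := ⟨by
    rintro A ⟨a, b, hab, ha, hb, hd⟩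
    rw [symmDiff_self, Finset.bot_eq_empty] at hd
    exact (Finset.insert_ne_empty a {b}) hd.symm⟩

/-- The Laplacian matrix (over ℝ) of a finite simple graph. -/
def lapMat {V : Type*} [Fintype V] [DecidableEq V] (G : SimpleGraph V) : Matrix V V ℝ :=
  letI := Classical.decRel G.Adj
  G.lapMatrix ℝ

/-- The Laplacian matrix (over ℂ) of a finite simple graph. -/
def lapMatC {V : Type*} [Fintype V] [DecidableEq V] (G : SimpleGraph V) : Matrix V V ℂ :=
  letI := Classical.decRel G.Adj
  G.lapMatrix ℂ

/-- The Laplacian eigenvalues of `G`, with multiplicity, in nondecreasing order. -/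
def lapSpec {V : Type*} [Fintype V] [DecidableEq V] (G : SimpleGraph V) : List ℝ :=
  ((lapMat G).charpoly.roots).sort (· ≤ ·)

/-- The algebraic connectivity: the second-smallest Laplacian eigenvalue. -/
def algConn {V : Type*} [Fintype V] [DecidableEq V] (G : SimpleGraph V) : ℝ :=
  (lapSpec G).getD 1 0

/-- The largest Laplacian eigenvalue (Laplacian spectral radius). -/
def lapSpecRadius {V : Type*} [Fintype V] [DecidableEq V] (G : SimpleGraph V) : ℝ :=
  (lapSpec G).getLastD 0

/-- `μ` is an eigenvalue of the Laplacian matrix of `G`. -/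
def IsLapEigen {V : Type*} [Fintype V] [DecidableEq V] (G : SimpleGraph V) (μ : ℝ) : Prop :=
  ∃ v : V → ℝ, v ≠ 0 ∧ (lapMat G).mulVec v = μ • v

/-- The induced subgraph of `G` on the complement of the vertex `i` (i.e. `G ∖ i`). -/
def deleteVert {V : Type*} (G : SimpleGraph V) (i : V) : SimpleGraph {v : V // v ≠ i} :=
  SimpleGraph.comap Subtype.val G

/-- The cycle graph on `ℤ/nℤ`, where `i` is adjacent to `i ± 1`. -/
def cycleG (n : ℕ) : SimpleGraph (ZMod n) where
  Adj x y := x ≠ y ∧ (x - y = 1 ∨ y - x = 1)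
  symm := ⟨by rintro x y ⟨hxy, h⟩; exact ⟨hxy.symm, h.symm⟩⟩
  loopless := ⟨by rintro x ⟨hx, _⟩; exact hx rfl⟩

/-- The inclusion matrix from `h`-subsets to `k`-subsets: rows indexed by `k`-subsets `A`,
columns by `h`-subsets `X`, with entry `1` if `X ⊆ A` and `0` otherwise. -/
def inclMatrix (V : Type*) [Fintype V] [DecidableEq V] (h k : ℕ) :
    Matrix {s : Finset V // s.card = k} {s : Finset V // s.card = h} ℝ :=
  fun A X => if X.1 ⊆ A.1 then 1 else 0

/-- The `(n;k)`-binomial matrix: rows indexed by `k`-subsets `A`, columns by vertices `j`,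
with entry `1` if `j ∈ A` and `0` otherwise. -/
def binomMatrix (V : Type*) [Fintype V] [DecidableEq V] (k : ℕ) :
    Matrix {s : Finset V // s.card = k} V ℝ :=
  fun A j => if j ∈ A.1 then 1 else 0

/-- The Kneser graph `K(n,k)`. -/
def kneserGraph (n k : ℕ) : SimpleGraph {s : Finset (Fin n) // s.card = k} where
  Adj A B := A ≠ B ∧ Disjoint A.1 B.1
  symm := ⟨by rintro A B ⟨h1, h2⟩; exact ⟨h1.symm, h2.symm⟩⟩
  loopless := ⟨by rintro A ⟨h1, _⟩; exact h1 rfl⟩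


/-- The `ν × ν` tridiagonal matrix `B(z)` for odd `n = 2ν + 1`: diagonal entries
`(2, 4, …, 4, 4 - z^ν - z^{-ν})`, superdiagonal entries `-1 - z⁻¹`,
subdiagonal entries `-1 - z`. -/
def Bodd (ν : ℕ) (z : ℂ) : Matrix (Fin ν) (Fin ν) ℂ :=
  fun i j =>
    if i = j then
      (if (i : ℕ) = 0 then 2 else if (i : ℕ) = ν - 1 then 4 - z ^ ν - z⁻¹ ^ ν else 4)
    else if (j : ℕ) = (i : ℕ) + 1 then -1 - z⁻¹
    else if (i : ℕ) = (j : ℕ) + 1 then -1 - z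
    else 0

end

/-!
Rotation `x ↦ x + c` of `C_n` is an automorphism of `F_2(C_n)`, so the Laplacian commutes with
the action of `ℤ/nℤ` on 2-subsets. The isotypic components `y_ψ = ∑_c ψ(-c) w(c + ·)` of an
eigenvector `w`, one for each character `ψ` of `ℤ/nℤ`, are again eigenvectors for the same
eigenvalue and add up to `n • w`, so one of them, `y`, is nonzero; it satisfies
`y(c + A) = ψ(c) y(A)`. Hence `y({j, j + h}) = ζ^j f_h` with `ζ = ψ(1)` and `f_h = y({0, h})`,
and the eigenvalue equation at the vertex `{0, h}`, whose neighbours are `{±1, h}` and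
`{0, h ± 1}`, is row `h` of `B(ζ) f = λ f`. In the last row the neighbour
`{0, ν + 1} = -ν + {0, ν}` produces the corner entry `4 - ζ^ν - ζ^{-ν}`.
-/

open scoped Pointwise symmDiff

section Fourier

variable {Γ V : Type*} [AddCommGroup Γ] [Fintype Γ] [AddAction Γ V]

def fourierComponent (ψ : AddChar Γ ℂ) (w : V → ℂ) (v : V) : ℂ :=
  ∑ c, ψ (-c) * w (c +ᵥ v)

lemma fourierComponent_vadd (ψ : AddChar Γ ℂ) (w : V → ℂ) (d : Γ) (v : V) :
    fourierComponent ψ w (d +ᵥ v) = ψ d * fourierComponent ψ w v := by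
  simp only [fourierComponent, vadd_vadd, Finset.mul_sum]
  refine Fintype.sum_equiv (Equiv.addRight d) _ _ fun c => ?_
  simp [← mul_assoc, ← AddChar.map_add_eq_mul]

lemma sum_fourierComponent (w : V → ℂ) (v : V) :
    ∑ ψ : AddChar Γ ℂ, fourierComponent ψ w v = Fintype.card Γ * w v := by
  classical
  simp only [fourierComponent]
  rw [Finset.sum_comm]
  simp [← Finset.sum_mul, AddChar.sum_apply_eq_ite]

lemma exists_fourierComponent_ne_zero {w : V → ℂ} (hw : w ≠ 0) :
    ∃ ψ : AddChar Γ ℂ, fourierComponent ψ w ≠ 0 := by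
  by_contra! h
  refine hw (funext fun v => ?_)
  have := sum_fourierComponent (Γ := Γ) w v
  simp only [h, Pi.zero_apply, Finset.sum_const_zero] at this
  simpa using this.symm

variable [Fintype V]

lemma fourierComponent_eigen {M : Matrix V V ℂ}
    (hM : ∀ (c : Γ) (y : V → ℂ), M *ᵥ (fun v => y (c +ᵥ v)) = fun v => (M *ᵥ y) (c +ᵥ v))
    {w : V → ℂ} {lam : ℂ} (hw : M *ᵥ w = lam • w) (ψ : AddChar Γ ℂ) :
    M *ᵥ fourierComponent ψ w = lam • fourierComponent ψ w := by
  have : fourierComponent ψ w = ∑ c, ψ (-c) • fun v => w (c +ᵥ v) := by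
    ext v; simp [fourierComponent]
  rw [this, Matrix.mulVec_sum, Finset.smul_sum]
  simp only [Matrix.mulVec_smul, hM, hw, smul_comm lam]
  rfl

end Fourier

namespace SimpleGraph.Iso

variable {V W : Type*} [Fintype V] [Fintype W] {G : SimpleGraph V} {H : SimpleGraph W}
  [DecidableRel G.Adj] [DecidableRel H.Adj] {R : Type*} [NonAssocRing R]

lemma lapMatrix_mulVec_comp [DecidableEq V] [DecidableEq W] (f : G ≃g H) (y : W → R) :
    G.lapMatrix R *ᵥ (y ∘ f) = (H.lapMatrix R *ᵥ y) ∘ f := by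
  ext v
  simp only [lapMatrix_mulVec_apply, Function.comp_apply, f.degree_eq]
  congr 1
  refine Finset.sum_nbij f (fun u hu => ?_) f.injective.injOn (fun u hu => ?_) fun _ _ => rfl
  · simpa [f.map_adj_iff] using hu
  · refine ⟨f.symm u, ?_, f.apply_symm_apply u⟩
    simpa [← f.map_adj_iff] using hu

end SimpleGraph.Iso

instance Finset.addActionCardSubtype {α : Type*} [AddGroup α] [DecidableEq α] {k : ℕ} :
    AddAction α {s : Finset α // s.card = k} where
  vadd c A := ⟨c +ᵥ A.1, by rw [Finset.card_vadd_finset, A.2]⟩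
  zero_vadd A := Subtype.ext (zero_vadd α A.1)
  add_vadd c d A := Subtype.ext (add_vadd c d A.1)

section TokenGraph

variable {α : Type*} [AddGroup α] [DecidableEq α]

lemma tokenGraph_adj_vadd_of_adj {G : SimpleGraph α}
    (hG : ∀ c a b, G.Adj (c + a) (c + b) ↔ G.Adj a b) {k : ℕ} (c : α)
    {A B : {s : Finset α // s.card = k}} (h : (tokenGraph G k).Adj A B) :
    (tokenGraph G k).Adj (c +ᵥ A) (c +ᵥ B) := by
  obtain ⟨a, b, hab, ha, hb, hAB⟩ := h
  refine ⟨c + a, c + b, (hG c a b).2 hab, Finset.vadd_mem_vadd_finset ha,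
    Finset.vadd_mem_vadd_finset hb, ?_⟩
  change (c +ᵥ A.1) ∆ (c +ᵥ B.1) = _
  rw [← Finset.vadd_finset_symmDiff, hAB, Finset.vadd_finset_insert, Finset.vadd_finset_singleton]
  rfl

def tokenGraphVaddIso {G : SimpleGraph α} (hG : ∀ c a b, G.Adj (c + a) (c + b) ↔ G.Adj a b)
    (k : ℕ) (c : α) : tokenGraph G k ≃g tokenGraph G k where
  toEquiv := AddAction.toPerm c
  map_rel_iff' {A B} := ⟨fun h => by
    simpa using tokenGraph_adj_vadd_of_adj hG (-c) h, tokenGraph_adj_vadd_of_adj hG c⟩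

end TokenGraph

section TokenGraphLaplacian

variable {V : Type*} [DecidableEq V] {G : SimpleGraph V} {k : ℕ}

lemma tokenGraph_adj_iff {A B : {s : Finset V // s.card = k}} :
    (tokenGraph G k).Adj A B ↔
      ∃ a ∈ A.1, ∃ b, G.Adj a b ∧ b ∉ A.1 ∧ B.1 = insert b (A.1.erase a) := by
  constructor
  · rintro ⟨a, b, hab, ha, hb, hAB⟩
    have hbA : b ∉ A.1 := by
      have := (Finset.ext_iff.1 hAB b).2 (by simp)
      rw [Finset.mem_symmDiff] at this
      tauto
    refine ⟨a, ha, b, hab, hbA, ?_⟩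
    rw [← symmDiff_symmDiff_cancel_left A.1 B.1, hAB]
    ext x
    simp only [Finset.mem_symmDiff, Finset.mem_insert, Finset.mem_singleton, Finset.mem_erase]
    grind
  · rintro ⟨a, ha, b, hab, hbA, hB⟩
    refine ⟨a, b, hab, ha, by simp [hB], ?_⟩
    ext x
    simp only [hB, Finset.mem_symmDiff, Finset.mem_insert, Finset.mem_singleton, Finset.mem_erase]
    grind

variable [Fintype V] [DecidableRel G.Adj] [DecidableRel (tokenGraph G k).Adj]

lemma tokenGraph_sum_neighborFinset {R : Type*} [AddCommMonoid R] (g : Finset V → R)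
    (A : {s : Finset V // s.card = k}) :
    ∑ B ∈ (tokenGraph G k).neighborFinset A, g B.1 =
      ∑ a ∈ A.1, ∑ b ∈ G.neighborFinset a \ A.1, g (insert b (A.1.erase a)) := by
  rw [Finset.sum_sigma']
  symm
  refine Finset.sum_bij (fun p hp => ⟨insert p.2 (A.1.erase p.1), ?_⟩) ?_ ?_ ?_ fun _ _ => rfl
  · simp only [Finset.mem_sigma, Finset.mem_sdiff, SimpleGraph.mem_neighborFinset] at hp
    have := Finset.card_pos.2 ⟨_, hp.1⟩
    rw [Finset.card_insert_of_notMem (fun h => hp.2.2 (Finset.mem_of_mem_erase h)),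
      Finset.card_erase_of_mem hp.1, A.2]
    omega
  · rintro ⟨a, b⟩ hp
    simp only [Finset.mem_sigma, Finset.mem_sdiff, SimpleGraph.mem_neighborFinset] at hp
    simpa [tokenGraph_adj_iff] using ⟨a, hp.1, b, hp.2.1, hp.2.2, rfl⟩
  · rintro ⟨a, b⟩ hp ⟨a', b'⟩ hp' h
    simp only [Finset.mem_sigma, Finset.mem_sdiff, SimpleGraph.mem_neighborFinset] at hp hp'
    simp only [Subtype.mk.injEq, Finset.ext_iff, Finset.mem_insert, Finset.mem_erase] at h
    have hb := h b
    have ha := h a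
    have hab : a ≠ b := fun h => hp.2.2 (h ▸ hp.1)
    have hab' : a' ≠ b' := fun h => hp'.2.2 (h ▸ hp'.1)
    grind
  · intro B hB
    obtain ⟨a, ha, b, hab, hbA, hB⟩ :=
      tokenGraph_adj_iff.1 ((SimpleGraph.mem_neighborFinset _ _ _).1 hB)
    exact ⟨⟨a, b⟩, by simp [ha, hab, hbA], Subtype.ext hB.symm⟩

lemma tokenGraph_lapMatrix_mulVec_apply {R : Type*} [NonAssocRing R] (Y : Finset V → R)
    (A : {s : Finset V // s.card = k}) :
    ((tokenGraph G k).lapMatrix R *ᵥ fun B => Y B.1) A =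
      ∑ a ∈ A.1, ∑ b ∈ G.neighborFinset a \ A.1, (Y A.1 - Y (insert b (A.1.erase a))) := by
  have hdeg : ((tokenGraph G k).degree A : R) = ∑ a ∈ A.1, ∑ b ∈ G.neighborFinset a \ A.1, 1 := by
    rw [← SimpleGraph.card_neighborFinset_eq_degree, Finset.card_eq_sum_ones, Nat.cast_sum,
      ← tokenGraph_sum_neighborFinset (fun _ => (1 : R))]
    simp
  simp [SimpleGraph.lapMatrix_mulVec_apply, tokenGraph_sum_neighborFinset, hdeg,
    Finset.sum_mul, Finset.sum_sub_distrib]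

end TokenGraphLaplacian

lemma ZMod.natCast_ne_zero_of_lt {n m : ℕ} (h0 : 0 < m) (hm : m < n) : (m : ZMod n) ≠ 0 := by
  rw [Ne, ZMod.natCast_eq_zero_iff]
  exact Nat.not_dvd_of_pos_of_lt h0 hm

lemma ZMod.exists_eq_natCast_or_eq_neg_natCast {n : ℕ} [NeZero n] {d : ZMod n} (hd : d ≠ 0) :
    ∃ h : ℕ, 1 ≤ h ∧ h ≤ n / 2 ∧ (d = h ∨ d = -h) := by
  refine ⟨d.valMinAbs.natAbs, ?_, d.natAbs_valMinAbs_le, ?_⟩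
  · rw [Nat.one_le_iff_ne_zero, Int.natAbs_ne_zero, Ne, ZMod.valMinAbs_eq_zero]
    exact hd
  · rw [ZMod.natCast_natAbs_valMinAbs]
    split_ifs
    · exact Or.inl rfl
    · exact Or.inr (neg_neg d).symm

lemma AddChar.map_natCast_eq_pow {n : ℕ} {M : Type*} [Monoid M] (ψ : AddChar (ZMod n) M)
    (m : ℕ) : ψ m = ψ 1 ^ m := by
  rw [← nsmul_one, AddChar.map_nsmul_eq_pow]

lemma Bodd_mulVec_apply (ν : ℕ) (z : ℂ) (g : ℕ → ℂ) (i : Fin ν) :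
    (Bodd ν z *ᵥ fun j => g j) i =
      (if (i : ℕ) = 0 then 2 else if (i : ℕ) = ν - 1 then 4 - z ^ ν - z⁻¹ ^ ν else 4) * g i +
        (if (i : ℕ) + 1 < ν then (-1 - z⁻¹) * g (i + 1) else 0) +
        (if 0 < (i : ℕ) then (-1 - z) * g (i - 1) else 0) := by
  set D : ℂ := if (i : ℕ) = 0 then 2 else if (i : ℕ) = ν - 1 then 4 - z ^ ν - z⁻¹ ^ ν else 4
  set b : ℕ → ℂ := fun m => if (i : ℕ) = m then D else if m = i + 1 then -1 - z⁻¹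
    else if (i : ℕ) = m + 1 then -1 - z else 0
  have hb : ∀ j, Bodd ν z i j = b j := fun j => by simp only [Bodd, Fin.ext_iff, b, D]
  have hsplit : ∀ m : ℕ, b m * g m =
      (if m = i then D * g i else 0) + (if m = i + 1 then (-1 - z⁻¹) * g (i + 1) else 0) +
        (if m = i - 1 then (if 0 < (i : ℕ) then (-1 - z) * g (i - 1) else 0) else 0) := by
    intro m
    simp only [b]
    split_ifs <;> first | omega | (subst_vars; ring)
  simp only [Matrix.mulVec, dotProduct, hb]
  rw [Fin.sum_univ_eq_sum_range (fun m => b m * g m)]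
  simp only [hsplit, Finset.sum_add_distrib, Finset.sum_ite_eq', Finset.mem_range, i.isLt, if_true]
  congr 1
  split_ifs <;> first | rfl | omega

section Cycle

variable {n : ℕ}

lemma cycleG_adj_add_left_iff (c a b : ZMod n) :
    (cycleG n).Adj (c + a) (c + b) ↔ (cycleG n).Adj a b := by
  simp [cycleG]

lemma cycleG_neighborFinset [NeZero n] [DecidableRel (cycleG n).Adj] (hn : 2 ≤ n)
    (a : ZMod n) : (cycleG n).neighborFinset a = {a + 1, a - 1} := by
  have h1 : (1 : ZMod n) ≠ 0 := by simpa using ZMod.natCast_ne_zero_of_lt (m := 1) one_pos hn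
  ext b
  rw [SimpleGraph.mem_neighborFinset]
  simp only [cycleG, Finset.mem_insert, Finset.mem_singleton]
  constructor
  · rintro ⟨-, h | h⟩
    · right; linear_combination -h
    · left; linear_combination h
  · rintro (rfl | rfl)
    · exact ⟨fun h => h1 (by linear_combination -h), Or.inr (by ring)⟩
    · exact ⟨fun h => h1 (by linear_combination h), Or.inl (by ring)⟩

lemma lapMatC_tokenGraph_cycleG_mulVec_vadd {k : ℕ} [NeZero n] (c : ZMod n)
    (y : {s : Finset (ZMod n) // s.card = k} → ℂ) :
    lapMatC (tokenGraph (cycleG n) k) *ᵥ (fun A => y (c +ᵥ A)) =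
      fun A => (lapMatC (tokenGraph (cycleG n) k) *ᵥ y) (c +ᵥ A) := by
  classical
  exact (tokenGraphVaddIso cycleG_adj_add_left_iff k c).lapMatrix_mulVec_comp y

end Cycle

lemma extend_subtype_val_vadd {α : Type*} [AddGroup α] [DecidableEq α] {k : ℕ} {R : Type*}
    [MulZeroClass R] {χ : α → R} {y : {s : Finset α // s.card = k} → R}
    (hy : ∀ c A, y (c +ᵥ A) = χ c * y A) (c : α) (s : Finset α) :
    Function.extend Subtype.val y 0 (c +ᵥ s) = χ c * Function.extend Subtype.val y 0 s := by
  by_cases hs : s.card = k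
  · exact (Subtype.val_injective.extend_apply y 0 (c +ᵥ ⟨s, hs⟩)).trans
      ((hy c _).trans (congrArg _ (Subtype.val_injective.extend_apply y 0 ⟨s, hs⟩).symm))
  · have hnot : ∀ t : Finset α, t.card ≠ k → Function.extend Subtype.val y 0 t = 0 :=
      fun t ht => Function.extend_apply' _ _ _ fun ⟨A, hA⟩ => ht (hA ▸ A.2)
    rw [hnot s hs, hnot _ (by rwa [Finset.card_vadd_finset]), mul_zero]

section Equivariant

variable {n : ℕ} {ψ : AddChar (ZMod n) ℂ} {Y : Finset (ZMod n) → ℂ}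

lemma apply_pair_of_vadd (hY : ∀ c s, Y (c +ᵥ s) = ψ c * Y s) (a b : ZMod n) :
    Y {a, b} = ψ a * Y {0, b - a} := by
  rw [← hY, Finset.vadd_finset_insert, Finset.vadd_finset_singleton, vadd_eq_add, vadd_eq_add,
    add_zero, add_sub_cancel]

lemma apply_pair_neg_of_vadd (hY : ∀ c s, Y (c +ᵥ s) = ψ c * Y s) (d : ZMod n) :
    Y {0, -d} = ψ (-d) * Y {0, d} := by
  rw [Finset.pair_comm, apply_pair_of_vadd hY, zero_sub, neg_neg]

lemma apply_natCast_pair_of_vadd (hY : ∀ c s, Y (c +ᵥ s) = ψ c * Y s) (j h : ℕ) :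
    Y {(j : ZMod n), (j : ZMod n) + h} = ψ 1 ^ j * Y {0, (h : ZMod n)} := by
  rw [apply_pair_of_vadd hY, add_sub_cancel_left, AddChar.map_natCast_eq_pow]

variable [NeZero n]

lemma apply_pair_eq_zero_of_vadd (hY : ∀ c s, Y (c +ᵥ s) = ψ c * Y s)
    (h0 : ∀ h : ℕ, 1 ≤ h → h ≤ n / 2 → Y {0, (h : ZMod n)} = 0) {a b : ZMod n} (hab : a ≠ b) :
    Y {a, b} = 0 := by
  obtain ⟨h, h1, hh, hd | hd⟩ := ZMod.exists_eq_natCast_or_eq_neg_natCast (sub_ne_zero.2 hab.symm)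
  all_goals rw [apply_pair_of_vadd hY, hd]
  · rw [h0 h h1 hh, mul_zero]
  · rw [apply_pair_neg_of_vadd hY, h0 h h1 hh, mul_zero, mul_zero]

lemma lapMatC_mulVec_apply_zero_pair (hn : 3 ≤ n) (hY : ∀ c s, Y (c +ᵥ s) = ψ c * Y s)
    {d : ZMod n} (hd : 0 ≠ d) :
    (lapMatC (tokenGraph (cycleG n) 2) *ᵥ fun B => Y B.1) ⟨{0, d}, Finset.card_pair hd⟩ =
      (if d = 1 then 0 else 2 * Y {0, d} - (1 + ψ 1) * Y {0, d - 1}) +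
        (if d = -1 then 0 else 2 * Y {0, d} - (1 + ψ (-1)) * Y {0, d + 1}) := by
  classical
  have h2 : (2 : ZMod n) ≠ 0 := by simpa using ZMod.natCast_ne_zero_of_lt (m := 2) two_pos hn
  rw [lapMatC, tokenGraph_lapMatrix_mulVec_apply]
  simp only [cycleG_neighborFinset (n := n) (by omega), Finset.sdiff_eq_filter, Finset.sum_filter]
  have h11 : (0 : ZMod n) + 1 ≠ 0 - 1 := fun h => h2 (by linear_combination h)
  have h12 : d + 1 ≠ d - 1 := fun h => h2 (by linear_combination h)
  have h1 : (1 : ZMod n) ≠ 0 := fun h => h2 (by linear_combination 2 * h)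
  have he0 : ({0, d} : Finset (ZMod n)).erase 0 = {d} := Finset.erase_insert (by simpa using hd)
  have hed : ({0, d} : Finset (ZMod n)).erase d = {0} := by
    rw [Finset.pair_comm]; exact Finset.erase_insert (by simpa using hd.symm)
  rw [Finset.sum_pair hd, Finset.sum_pair h11, Finset.sum_pair h12, he0, hed,
    Finset.pair_comm (d + 1), Finset.pair_comm (d - 1), apply_pair_of_vadd hY (0 + 1),
    apply_pair_of_vadd hY (0 - 1)]
  have h1m : (1 : ZMod n) ≠ -1 := fun h => h2 (by linear_combination h)
  simp only [Finset.mem_insert, Finset.mem_singleton, zero_add, zero_sub, sub_neg_eq_add, h1,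
    zero_eq_neg, add_eq_zero_iff_eq_neg, sub_eq_zero, add_eq_left, sub_eq_self, false_or,
    or_false, eq_comm (a := (1 : ZMod n)), eq_comm (a := (-1 : ZMod n))]
  split_ifs <;> ring

lemma Bodd_mulVec_eq_smul_of_lapMatC {ν : ℕ} (hν : 2 ≤ ν) (hn : n = 2 * ν + 1)
    (hY : ∀ c s, Y (c +ᵥ s) = ψ c * Y s) {lam : ℂ}
    (heig : lapMatC (tokenGraph (cycleG n) 2) *ᵥ (fun B => Y B.1) = lam • fun B => Y B.1) :
    Bodd ν (ψ 1) *ᵥ (fun i : Fin ν => Y {0, ((i + 1 : ℕ) : ZMod n)}) =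
      lam • fun i : Fin ν => Y {0, ((i + 1 : ℕ) : ZMod n)} := by
  ext ⟨k, hk⟩
  have hd : (0 : ZMod n) ≠ ((k + 1 : ℕ) : ZMod n) :=
    (ZMod.natCast_ne_zero_of_lt (by omega) (by omega)).symm
  have key := congrFun heig ⟨_, Finset.card_pair hd⟩
  rw [lapMatC_mulVec_apply_zero_pair (by omega) hY hd, Pi.smul_apply, smul_eq_mul] at key
  have hsub : ((k + 1 : ℕ) : ZMod n) - 1 = (k : ZMod n) := by push_cast; ring
  have hadd : ((k + 1 : ℕ) : ZMod n) + 1 = ((k + 1 + 1 : ℕ) : ZMod n) := by push_cast; ring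
  have hm1 : ((k + 1 : ℕ) : ZMod n) ≠ -1 := by
    rw [Ne, eq_neg_iff_add_eq_zero, hadd]
    exact ZMod.natCast_ne_zero_of_lt (by omega) (by omega)
  rw [if_neg hm1, hadd, hsub, AddChar.map_neg_eq_inv] at key
  rw [Bodd_mulVec_apply ν (ψ 1) (fun m => Y {0, ((m + 1 : ℕ) : ZMod n)})]
  simp only [Pi.smul_apply, smul_eq_mul]
  rcases Nat.eq_zero_or_pos k with rfl | hk0
  · rw [if_pos (by simp)] at key
    rw [if_pos rfl, if_pos (by omega), if_neg (lt_irrefl 0)]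
    linear_combination key
  have hne1 : ((k + 1 : ℕ) : ZMod n) ≠ 1 := by
    rw [Ne, ← sub_eq_zero, hsub]
    exact ZMod.natCast_ne_zero_of_lt hk0 (by omega)
  rw [if_neg hne1] at key
  rw [if_neg hk0.ne', if_pos hk0, Nat.sub_add_cancel hk0]
  by_cases hlast : k = ν - 1
  · obtain rfl : ν = k + 1 := by omega
    have hwrap : ((k + 1 + 1 : ℕ) : ZMod n) = -((k + 1 : ℕ) : ZMod n) := by
      rw [eq_neg_iff_add_eq_zero, ← Nat.cast_add, show k + 1 + 1 + (k + 1) = n by omega,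
        ZMod.natCast_self]
    have hrel : (ψ 1)⁻¹ ^ (k + 1 + 1) = ψ 1 ^ (k + 1) := by
      rw [inv_pow, ← AddChar.map_natCast_eq_pow, ← AddChar.map_neg_eq_inv, hwrap, neg_neg,
        AddChar.map_natCast_eq_pow]
    rw [hwrap, apply_pair_neg_of_vadd hY, AddChar.map_neg_eq_inv, AddChar.map_natCast_eq_pow]
      at key
    rw [if_pos hlast, if_neg (by omega)]
    linear_combination key + Y {0, ((k + 1 : ℕ) : ZMod n)} * hrel
  · rw [if_neg hlast, if_pos (by omega)]
    linear_combination key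

end Equivariant

noncomputable section

theorem stmt_16 {n ν : ℕ} [NeZero n] (hν : 2 ≤ ν) (hn : n = 2 * ν + 1)
    (lam : ℂ) (w : {s : Finset (ZMod n) // s.card = 2} → ℂ) (hw : w ≠ 0)
    (heig : (lapMatC (tokenGraph (cycleG n) 2)).mulVec w = lam • w) :
    ∃ (ζ : ℂ) (f : Fin ν → ℂ) (y : {s : Finset (ZMod n) // s.card = 2} → ℂ),
      ζ ^ n = 1 ∧ f ≠ 0 ∧ (Bodd ν ζ).mulVec f = lam • f ∧
      y ≠ 0 ∧ (lapMatC (tokenGraph (cycleG n) 2)).mulVec y = lam • y ∧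
      ∀ (j h : ℕ), 1 ≤ h → (hh : h ≤ ν) →
        ∀ A : {s : Finset (ZMod n) // s.card = 2},
          A.1 = {(j : ZMod n), (j : ZMod n) + (h : ZMod n)} →
          y A = f ⟨h - 1, by omega⟩ * ζ ^ j := by
  obtain ⟨ψ, hψ⟩ := exists_fourierComponent_ne_zero (Γ := ZMod n) hw
  have hy := fourierComponent_eigen (M := lapMatC (tokenGraph (cycleG n) 2))
    lapMatC_tokenGraph_cycleG_mulVec_vadd heig ψ
  -- extending by zero to all finsets lets values at pairs `{a, b}` be written without card proofs
  have hYy : (fun A => Function.extend Subtype.val (fourierComponent ψ w) 0 A.1) =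
      fourierComponent ψ w := funext (Subtype.val_injective.extend_apply (fourierComponent ψ w) 0)
  have hY := extend_subtype_val_vadd (y := fourierComponent ψ w) (fourierComponent_vadd ψ w)
  generalize Function.extend Subtype.val (fourierComponent ψ w) 0 = Y at hYy hY
  generalize fourierComponent ψ w = y at hψ hy hYy
  subst hYy
  refine ⟨ψ 1, fun i : Fin ν => Y {0, ((i + 1 : ℕ) : ZMod n)}, fun A => Y A.1, ?_, ?_,
    Bodd_mulVec_eq_smul_of_lapMatC hν hn hY hy, hψ, hy, ?_⟩
  · rw [← AddChar.map_natCast_eq_pow, ZMod.natCast_self, AddChar.map_zero_eq_one]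
  · intro h0
    refine hψ (funext fun A => ?_)
    obtain ⟨a, b, hab, hA⟩ := Finset.card_eq_two.1 A.2
    rw [hA]
    refine apply_pair_eq_zero_of_vadd hY (fun h h1 hh => ?_) hab
    simpa [Nat.sub_add_cancel h1] using congrFun h0 ⟨h - 1, by omega⟩
  · intro j h h1 _ A hA
    simp only [hA, apply_natCast_pair_of_vadd hY, Nat.sub_add_cancel h1, mul_comm]

end
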